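/- arXiv:2412.12454 — 3 statements merged into one kernel-verified Lean document; each statement's English description precedes it below -/
import Mathlib

section
/- Let k, n ≥ 10, b ≥ 1 and a_1, …, a_n be positive integers with a_j ≤ b for all j and Σ_j a_j = k·b, and let G, t be the associated construction. Then every clustering of G has cost at least t. -/
open Finset

universe u

namespace ClusterEditing




variable {V : Type u}

/-- Cost of a partition `P` of the finset `X` with respect to `G`: the number of
edges of `G` within `X` whose endpoints lie in different parts, plus the number of
non-adjacent pairs of distinct vertices lying in the same part. -/
noncomputable def costOn [DecidableEq V] (G : SimpleGraph V) (X : Finset V) (P : Finpartition X) : ℕ :=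
  {e : Sym2 V | e ∈ G.edgeSet ∧ (∀ v ∈ e, v ∈ X) ∧ ¬ ∃ C ∈ P.parts, ∀ v ∈ e, v ∈ C}.ncard +
  {e : Sym2 V | e ∈ Gᶜ.edgeSet ∧ ∃ C ∈ P.parts, ∀ v ∈ e, v ∈ C}.ncard

/-- Cost of a clustering (a partition of the whole vertex set). -/
noncomputable def cost [Fintype V] [DecidableEq V] (G : SimpleGraph V)
    (P : Finpartition (univ : Finset V)) : ℕ :=
  costOn G univ P

/-- An optimal clustering: one of minimum cost. -/
def IsOptimal [Fintype V] [DecidableEq V] (G : SimpleGraph V)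
    (P : Finpartition (univ : Finset V)) : Prop :=
  ∀ Q : Finpartition (univ : Finset V), cost G P ≤ cost G Q

/-- Number of (ordered) adjacent pairs `(u, v)` with `u ∈ S`, `v ∈ T`. -/
noncomputable def eBetween (G : SimpleGraph V) (S T : Finset V) : ℕ :=
  {p : V × V | p.1 ∈ S ∧ p.2 ∈ T ∧ G.Adj p.1 p.2}.ncard

/-- Number of non-adjacent pairs between `S` and `T`. -/
noncomputable def nonEBetween (G : SimpleGraph V) (S T : Finset V) : ℕ :=
  S.card * T.card - eBetween G S T





/-- Vertex type for the hardness construction: `k` cliques `B i` of size `h`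
and `n` cliques `A j` of size `a j`. -/
abbrev BinV (k h n : ℕ) (a : Fin n → ℕ) : Type :=
  (Fin k × Fin h) ⊕ ((j : Fin n) × Fin (a j))

/-- Two vertices lie in the same `B i`, or the same `A j`, or on different sides. -/
def sameSide {k h n : ℕ} {a : Fin n → ℕ} : BinV k h n a → BinV k h n a → Prop
  | Sum.inl x, Sum.inl y => x.1 = y.1
  | Sum.inr x, Sum.inr y => x.1 = y.1
  | _, _ => True

/-- The construction: the join of the cluster graph `B 1 ∪ ⋯ ∪ B k`
(cliques of size `h`) with the cluster graph `A 1 ∪ ⋯ ∪ A n` (cliques of sizes `a j`). -/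
def binGraph (k h n : ℕ) (a : Fin n → ℕ) : SimpleGraph (BinV k h n a) where
  Adj u v := u ≠ v ∧ sameSide u v
  symm := by
    constructor
    rintro u v ⟨h1, h2⟩
    refine ⟨h1.symm, ?_⟩
    cases u with
    | inl x =>
      cases v with
      | inl y => exact ((h2 : x.1 = y.1)).symm
      | inr y => trivial
    | inr x =>
      cases v with
      | inl y => trivial
      | inr y => exact ((h2 : x.1 = y.1)).symm
  loopless := by constructor; rintro u ⟨h1, _⟩; exact h1 rfl

def Bset (k h n : ℕ) (a : Fin n → ℕ) (i : Fin k) : Finset (BinV k h n a) :=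
  (univ : Finset (Fin h)).image fun x => Sum.inl (i, x)

def Aset (k h n : ℕ) (a : Fin n → ℕ) (j : Fin n) : Finset (BinV k h n a) :=
  (univ : Finset (Fin (a j))).image fun x => Sum.inr ⟨j, x⟩


section Numeric
variable {ι : Type*} [DecidableEq ι]

set_option maxHeartbeats 1000000 in
lemma numeric (P : Finset ι) (k b H : ℕ) (hk : 1 ≤ k) (hb : 1 ≤ b)
    (hH1 : 2 * (k * b) ≤ H) (hH2 : k * b ^ 2 ≤ H)
    (x : ι → Fin k → ℕ) (Y : ι → ℕ)
    (hcol : ∀ i, ∑ p ∈ P, x p i = H)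
    (hY : ∑ p ∈ P, Y p = k * b) :
    (k : ℤ) * H ^ 2 - 2 * (k * b) * H + k * b ^ 2 ≤
      (∑ p ∈ P, ((∑ i, (x p i : ℤ)) - Y p) ^ 2) +
        2 * (∑ i : Fin k, ((H : ℤ) ^ 2 - ∑ p ∈ P, (x p i : ℤ) ^ 2)) := by
  have hHb2 : (k : ℤ) * b ^ 2 ≤ (H : ℤ) := by exact_mod_cast hH2
  have hH2a : 2 * ((k : ℤ) * b) ≤ (H : ℤ) := by exact_mod_cast hH1
  have hxle : ∀ p ∈ P, ∀ i, x p i ≤ H := by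
    intro p hp i
    rw [← hcol i]
    exact Finset.single_le_sum (f := fun q => x q i) (fun q _ => Nat.zero_le _) hp
  have hYle : ∀ p ∈ P, Y p ≤ k * b := by
    intro p hp
    rw [← hY]
    exact Finset.single_le_sum (f := Y) (fun q _ => Nat.zero_le _) hp
  -- each column contributes nonnegatively to the second term
  have hcolnn : ∀ i : Fin k, (0 : ℤ) ≤ (H : ℤ) ^ 2 - ∑ p ∈ P, (x p i : ℤ) ^ 2 := by
    intro i
    have h1 : ∑ p ∈ P, (x p i : ℤ) ^ 2 ≤ (∑ p ∈ P, (x p i : ℤ)) ^ 2 :=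
      sum_sq_le_sq_sum_of_nonneg (fun q _ => by positivity)
    have h2 : (∑ p ∈ P, (x p i : ℤ)) = (H : ℤ) := by
      push_cast [← hcol i]; ring
    rw [h2] at h1; linarith
  by_cases hM : ∀ i : Fin k, ∃ p ∈ P, x p i = H
  · -- intact columns
    choose p₀ hp₀P hp₀H using hM
    have hx01 : ∀ p ∈ P, ∀ i, p ≠ p₀ i → x p i = 0 := by
      intro p hp i hne
      have hsum := hcol i
      have h1 : ∑ q ∈ P.erase (p₀ i), x q i + x (p₀ i) i = H := by
        rw [Finset.sum_erase_add _ _ (hp₀P i)]; exact hsum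
      have h2 : ∑ q ∈ P.erase (p₀ i), x q i = 0 := by
        have := hp₀H i; omega
      have h3 : x p i ≤ ∑ q ∈ P.erase (p₀ i), x q i :=
        Finset.single_le_sum (f := fun q => x q i) (fun q _ => Nat.zero_le _)
          (Finset.mem_erase.2 ⟨hne, hp⟩)
      omega
    set c : ι → ℕ := fun p => #(univ.filter fun i : Fin k => p₀ i = p) with hc
    have hXc : ∀ p ∈ P, (∑ i, (x p i : ℤ)) = (c p : ℤ) * H := by
      intro p hp
      have : ∀ i : Fin k, (x p i : ℤ) = if p₀ i = p then (H : ℤ) else 0 := by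
        intro i
        by_cases h : p₀ i = p
        · rw [if_pos h, ← h]; exact_mod_cast congrArg (Nat.cast : ℕ → ℤ) (hp₀H i)
        · rw [if_neg h, hx01 p hp i (fun hh => h hh.symm)]; norm_num
      rw [Finset.sum_congr rfl (fun i _ => this i), Finset.sum_ite, Finset.sum_const,
        Finset.sum_const_zero, add_zero, nsmul_eq_mul]
    have hsumc : ∑ p ∈ P, c p = k := by
      have := Finset.card_eq_sum_card_fiberwise (f := p₀) (s := (univ : Finset (Fin k)))
        (t := P) (fun i _ => hp₀P i)
      simpa [hc] using this.symm
    -- key pointwise bound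
    have hkey : ∀ p ∈ P, (c p : ℤ) * H ^ 2 - 2 * H * (if c p = 1 then (Y p : ℤ) else 0)
        + (if c p = 1 then (Y p : ℤ) ^ 2 else 0) ≤ ((c p : ℤ) * H - Y p) ^ 2 := by
      intro p hp
      have hYp : (Y p : ℤ) ≤ (k : ℤ) * b := by exact_mod_cast hYle p hp
      have hYnn : (0 : ℤ) ≤ (Y p : ℤ) := Int.natCast_nonneg _
      rcases Nat.lt_or_ge (c p) 2 with hcp | hcp
      · interval_cases h : c p <;> simp_all <;> nlinarith
      · have hcp' : (2 : ℤ) ≤ (c p : ℤ) := by exact_mod_cast hcp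
        have hcif : (if c p = 1 then (Y p : ℤ) else 0) = 0 := by
          simp [Nat.ne_of_gt hcp]
        have hcif2 : (if c p = 1 then (Y p : ℤ) ^ 2 else 0) = 0 := by
          simp [Nat.ne_of_gt hcp]
        rw [hcif, hcif2]
        have hH0 : (0:ℤ) ≤ (H:ℤ) := Int.natCast_nonneg _
        have h2Y : 2 * (Y p : ℤ) ≤ (H : ℤ) := by linarith
        have hin : (0:ℤ) ≤ ((c p : ℤ) - 1) * H - 2 * Y p := by nlinarith
        have hfact : (0:ℤ) ≤ (c p : ℤ) * H * (((c p : ℤ) - 1) * H - 2 * Y p) :=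
          mul_nonneg (by positivity) hin
        nlinarith [sq_nonneg ((Y p : ℤ))]
    have hsum1 : ∑ p ∈ P, ((c p : ℤ) * H - Y p) ^ 2 ≥
        (k : ℤ) * H ^ 2 - 2 * H * (∑ p ∈ P.filter (fun p => c p = 1), (Y p : ℤ))
        + ∑ p ∈ P.filter (fun p => c p = 1), (Y p : ℤ) ^ 2 := by
      have := Finset.sum_le_sum hkey
      rw [Finset.sum_add_distrib, Finset.sum_sub_distrib, ← Finset.mul_sum,
        ← Finset.sum_filter, ← Finset.sum_filter] at this
      have hck : ∑ p ∈ P, (c p : ℤ) * H ^ 2 = (k : ℤ) * H ^ 2 := by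
        rw [← Finset.sum_mul]
        congr 1
        exact_mod_cast congrArg (Nat.cast : ℕ → ℤ) hsumc
      linarith [this, hck.symm.le]
    set W : ℤ := ∑ p ∈ P.filter (fun p => c p = 1), (Y p : ℤ) with hW
    have hWle : W ≤ (k : ℤ) * b := by
      have : ∑ p ∈ P.filter (fun p => c p = 1), Y p ≤ ∑ p ∈ P, Y p :=
        Finset.sum_le_sum_of_subset (Finset.filter_subset _ _)
      rw [hY] at this
      have : (∑ p ∈ P.filter (fun p => c p = 1), (Y p:ℤ)) ≤ ((k*b : ℕ) : ℤ) := by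
        exact_mod_cast this
      simpa using this
    have hfinal : -2 * H * W + ∑ p ∈ P.filter (fun p => c p = 1), (Y p : ℤ) ^ 2 ≥
        -2 * ((k:ℤ)*b) * H + (k:ℤ) * b ^ 2 := by
      rcases eq_or_lt_of_le hWle with hWa | hWa
      · -- W = a : Cauchy-Schwarz
        have hcard : (#(P.filter (fun p => c p = 1)) : ℤ) ≤ (k : ℤ) := by
          have h1 : #(P.filter (fun p => c p = 1)) = ∑ p ∈ P.filter (fun p => c p = 1), 1 := by
            simp
          have h2 : ∑ p ∈ P.filter (fun p => c p = 1), 1 ≤ ∑ p ∈ P.filter (fun p => c p = 1), c p := by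
            apply Finset.sum_le_sum
            intro p hp
            have := (Finset.mem_filter.1 hp).2
            omega
          have h3 : ∑ p ∈ P.filter (fun p => c p = 1), c p ≤ ∑ p ∈ P, c p :=
            Finset.sum_le_sum_of_subset (Finset.filter_subset _ _)
          have : #(P.filter (fun p => c p = 1)) ≤ k := by omega
          exact_mod_cast this
        have hCS : W ^ 2 ≤ (#(P.filter (fun p => c p = 1)) : ℤ) *
            ∑ p ∈ P.filter (fun p => c p = 1), (Y p : ℤ) ^ 2 := by
          simpa [hW] using
            (sq_sum_le_card_mul_sum_sq (s := P.filter (fun p => c p = 1))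
              (f := fun p => (Y p : ℤ)))
        have hsqnn : (0:ℤ) ≤ ∑ p ∈ P.filter (fun p => c p = 1), (Y p : ℤ) ^ 2 :=
          Finset.sum_nonneg (fun p _ => sq_nonneg _)
        have hk' : (1:ℤ) ≤ (k:ℤ) := by exact_mod_cast hk
        have : (k:ℤ) * ((k:ℤ) * b^2) ≤ (k:ℤ) * ∑ p ∈ P.filter (fun p => c p = 1), (Y p : ℤ) ^ 2 := by
          calc (k:ℤ) * ((k:ℤ) * b^2) = ((k:ℤ)*b)^2 := by ring
          _ = W^2 := by rw [hWa]
          _ ≤ (#(P.filter (fun p => c p = 1)) : ℤ) * ∑ p ∈ P.filter (fun p => c p = 1), (Y p : ℤ) ^ 2 := hCS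
          _ ≤ (k:ℤ) * ∑ p ∈ P.filter (fun p => c p = 1), (Y p : ℤ) ^ 2 :=
              mul_le_mul_of_nonneg_right hcard hsqnn
        have h4 : (k:ℤ) * b^2 ≤ ∑ p ∈ P.filter (fun p => c p = 1), (Y p : ℤ) ^ 2 :=
          le_of_mul_le_mul_left this (by linarith)
        rw [← hWa]
        nlinarith
      · -- W < a
        have hWnn : (0:ℤ) ≤ W := Finset.sum_nonneg (fun p _ => Int.natCast_nonneg _)
        have hsqnn : (0:ℤ) ≤ ∑ p ∈ P.filter (fun p => c p = 1), (Y p : ℤ) ^ 2 :=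
          Finset.sum_nonneg (fun p _ => sq_nonneg _)
        have hW1 : W + 1 ≤ (k:ℤ)*b := hWa
        have hHnn : (0:ℤ) ≤ (H:ℤ) := Int.natCast_nonneg _
        nlinarith
    have hT : ∑ p ∈ P, ((∑ i, (x p i : ℤ)) - Y p) ^ 2 = ∑ p ∈ P, ((c p : ℤ) * H - Y p) ^ 2 :=
      Finset.sum_congr rfl (fun p hp => by rw [hXc p hp])
    have hQ : (0:ℤ) ≤ 2 * (∑ i : Fin k, ((H : ℤ) ^ 2 - ∑ p ∈ P, (x p i : ℤ) ^ 2)) := by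
      have := Finset.sum_nonneg (fun i (_ : i ∈ (univ : Finset (Fin k))) => hcolnn i)
      linarith
    linarith [hsum1, hfinal, hQ, hT.le, hT.ge]
  · -- some column is split
    push_neg at hM
    obtain ⟨i₀, hi₀⟩ := hM
    have hH0 : 1 ≤ H := by nlinarith
    have hPne : P.Nonempty := by
      rcases Finset.eq_empty_or_nonempty P with h | h
      · exfalso
        have h2 := hcol ⟨0, hk⟩
        rw [h, Finset.sum_empty] at h2
        omega
      · exact h
    obtain ⟨pstar, hpstar, hmax⟩ :=
      Finset.exists_max_image P (fun p => ∑ i, (x p i : ℤ)) hPne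
    set Xs : ℤ := ∑ i, (x pstar i : ℤ) with hXs
    set Qx : ℤ := ∑ p ∈ P, ∑ i, (x p i : ℤ) ^ 2 with hQx
    set S : ℤ := ∑ i : Fin k, ((H : ℤ) ^ 2 - ∑ p ∈ P, (x p i : ℤ) ^ 2) with hS
    set D : ℤ := ∑ p ∈ P, ((∑ i, (x p i : ℤ)) ^ 2 - ∑ i, (x p i : ℤ) ^ 2) with hD
    have hterm : ∀ p ∈ P, (0:ℤ) ≤ (∑ i, (x p i : ℤ)) ^ 2 - ∑ i, (x p i : ℤ) ^ 2 := by
      intro p hp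
      have := sum_sq_le_sq_sum_of_nonneg
        (s := (univ : Finset (Fin k))) (f := fun i => (x p i : ℤ))
        (fun i _ => Int.natCast_nonneg _)
      linarith
    have hDnn : (0:ℤ) ≤ D := Finset.sum_nonneg hterm
    have hXsnn : (0:ℤ) ≤ Xs := Finset.sum_nonneg (fun i _ => Int.natCast_nonneg _)
    have hDs : Xs ^ 2 - (H:ℤ) * Xs ≤ D := by
      have h1 : Xs ^ 2 - ∑ i, (x pstar i : ℤ) ^ 2 ≤ D :=
        Finset.single_le_sum hterm hpstar
      have h2 : ∑ i, (x pstar i : ℤ) ^ 2 ≤ (H:ℤ) * Xs := by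
        rw [hXs, Finset.mul_sum]
        apply Finset.sum_le_sum
        intro i _
        have hle : (x pstar i : ℤ) ≤ (H : ℤ) := by exact_mod_cast hxle pstar hpstar i
        nlinarith [Int.natCast_nonneg (x pstar i)]
      linarith
    have hXY : ∑ p ∈ P, (∑ i, (x p i : ℤ)) * Y p ≤ Xs * ((k:ℤ) * b) := by
      calc ∑ p ∈ P, (∑ i, (x p i : ℤ)) * Y p ≤ ∑ p ∈ P, Xs * Y p := by
            apply Finset.sum_le_sum
            intro p hp
            exact mul_le_mul_of_nonneg_right (hmax p hp) (Int.natCast_nonneg _)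
        _ = Xs * ((k:ℤ) * b) := by
            rw [← Finset.mul_sum]
            congr 1
            rw [← Nat.cast_sum, hY]; push_cast; ring
    have hXsbound : 2 * ((k:ℤ)*b) * Xs ≤ 2 * ((k:ℤ)*b) * H + D := by
      rcases le_or_gt Xs (H:ℤ) with h | h
      · have : 2 * ((k:ℤ)*b) * Xs ≤ 2 * ((k:ℤ)*b) * H := by
          apply mul_le_mul_of_nonneg_left h
          positivity
        linarith
      · have h1 : (2:ℤ) * ((k:ℤ)*b) * (Xs - H) ≤ (H:ℤ) * (Xs - H) := by
          apply mul_le_mul_of_nonneg_right hH2a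
          linarith
        have h2 : (H:ℤ) * (Xs - H) ≤ Xs * (Xs - H) := by
          apply mul_le_mul_of_nonneg_right _ (by linarith)
          linarith
        nlinarith [hDs]
    have hTlb : Qx + D - 2 * (Xs * ((k:ℤ)*b)) ≤ ∑ p ∈ P, ((∑ i, (x p i : ℤ)) - Y p) ^ 2 := by
      have h1 : ∀ p ∈ P, (∑ i, (x p i : ℤ)) ^ 2 - 2 * ((∑ i, (x p i : ℤ)) * Y p) ≤
          ((∑ i, (x p i : ℤ)) - Y p) ^ 2 := by
        intro p hp
        nlinarith [sq_nonneg ((Y p : ℤ))]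
      have h2 := Finset.sum_le_sum h1
      rw [Finset.sum_sub_distrib, ← Finset.mul_sum] at h2
      have h3 : ∑ p ∈ P, (∑ i, (x p i : ℤ)) ^ 2 = Qx + D := by
        rw [hQx, hD, ← Finset.sum_add_distrib]
        apply Finset.sum_congr rfl
        intro p hp
        ring
      linarith [hXY]
    have hSval : S = (k:ℤ) * H ^ 2 - Qx := by
      rw [hS, Finset.sum_sub_distrib, Finset.sum_const, hQx, Finset.sum_comm]
      simp [mul_comm]
    have hSH : (H:ℤ) ≤ S := by
      have h1 : ∀ p ∈ P, (x p i₀ : ℤ) ^ 2 ≤ ((H:ℤ) - 1) * (x p i₀ : ℤ) := by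
        intro p hp
        have hle : x p i₀ ≤ H - 1 := by
          have := hxle p hp i₀
          have := hi₀ p hp
          omega
        have hle' : (x p i₀ : ℤ) ≤ (H:ℤ) - 1 := by
          have : (x p i₀ : ℤ) ≤ ((H - 1 : ℕ) : ℤ) := by exact_mod_cast hle
          have hcast : ((H - 1 : ℕ) : ℤ) = (H:ℤ) - 1 := by
            have : 1 ≤ H := hH0
            push_cast [this]
            ring
          linarith [hcast ▸ this]
        nlinarith [Int.natCast_nonneg (x p i₀)]
      have h2 := Finset.sum_le_sum h1
      rw [← Finset.mul_sum] at h2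
      have h3 : ∑ p ∈ P, (x p i₀ : ℤ) = (H:ℤ) := by rw [← Nat.cast_sum, hcol i₀]
      rw [h3] at h2
      have h4 : (H:ℤ)^2 - ∑ p ∈ P, (x p i₀ : ℤ)^2 ≤ S := by
        apply Finset.single_le_sum (f := fun i => (H:ℤ)^2 - ∑ p ∈ P, (x p i : ℤ)^2)
          (fun i _ => hcolnn i) (Finset.mem_univ i₀)
      nlinarith [h4, h2]
    linarith [hTlb, hXsbound, hSH, hSval.le, hSval.ge, hHb2]

end Numeric

section Graph
variable {k H n : ℕ} {a : Fin n → ℕ}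

/-- classifier of a vertex into its block -/
def cl : BinV k H n a → Fin k ⊕ Fin n
  | Sum.inl x => Sum.inl x.1
  | Sum.inr x => Sum.inr x.1

lemma cl_isLeft (v : BinV k H n a) : (cl v).isLeft = v.isLeft := by cases v <;> rfl

instance : DecidableRel (@sameSide k H n a) := fun u v =>
  match u, v with
  | Sum.inl x, Sum.inl y => inferInstanceAs (Decidable (x.1 = y.1))
  | Sum.inl _, Sum.inr _ => inferInstanceAs (Decidable True)
  | Sum.inr _, Sum.inl _ => inferInstanceAs (Decidable True)
  | Sum.inr x, Sum.inr y => inferInstanceAs (Decidable (x.1 = y.1))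

instance : DecidableRel (binGraph k H n a).Adj := fun u v =>
  inferInstanceAs (Decidable (u ≠ v ∧ sameSide u v))

lemma adj_iff (u v : BinV k H n a) :
    (binGraph k H n a).Adj u v ↔ v ≠ u ∧ (cl v = cl u ∨ v.isLeft ≠ u.isLeft) := by
  show (u ≠ v ∧ sameSide u v) ↔ _
  cases u <;> cases v <;> simp [sameSide, cl] <;> aesop

lemma pair_card {α : Type*} [DecidableEq α] (C : Finset α) (R : α → α → Prop)
    [DecidableRel R] :
    #((C ×ˢ C).filter fun p => R p.1 p.2) = ∑ u ∈ C, #(C.filter fun v => R u v) := by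
  rw [Finset.card_filter, Finset.sum_product]
  exact Finset.sum_congr rfl fun u _ => (Finset.card_filter _ _).symm

/-- size of the intersection of `C` with a block -/
def fib (C : Finset (BinV k H n a)) (bl : Fin k ⊕ Fin n) : ℕ :=
  #(C.filter fun v => cl v = bl)

def XL (C : Finset (BinV k H n a)) : ℕ := ∑ i : Fin k, fib C (Sum.inl i)
def YR (C : Finset (BinV k H n a)) : ℕ := ∑ j : Fin n, fib C (Sum.inr j)

lemma card_eq_sum_fib (C : Finset (BinV k H n a)) : #C = ∑ bl, fib C bl :=
  Finset.card_eq_sum_card_fiberwise (fun v _ => mem_univ (cl v))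

lemma card_eq_XL_add_YR (C : Finset (BinV k H n a)) : #C = XL C + YR C := by
  rw [card_eq_sum_fib C, Fintype.sum_sum_type]; rfl

lemma filter_isLeft_card (C : Finset (BinV k H n a)) :
    #(C.filter fun v => v.isLeft = true) = XL C := by
  rw [Finset.card_eq_sum_card_fiberwise
    (f := fun v : BinV k H n a => cl v) (t := univ) (fun v _ => mem_univ _),
    Fintype.sum_sum_type]
  have h1 : ∀ i : Fin k,
      #((C.filter fun v => v.isLeft = true).filter fun v => cl v = Sum.inl i)
        = fib C (Sum.inl i) := by
    intro i
    rw [Finset.filter_filter]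
    congr 1
    apply Finset.filter_congr
    intro v _
    constructor
    · exact fun h => h.2
    · intro h
      refine ⟨?_, h⟩
      rw [← cl_isLeft, h]; rfl
  have h2 : ∀ j : Fin n,
      #((C.filter fun v => v.isLeft = true).filter fun v => cl v = Sum.inr j) = 0 := by
    intro j
    rw [Finset.filter_filter, Finset.card_eq_zero, Finset.filter_eq_empty_iff]
    rintro v _ ⟨hL, hcl⟩
    rw [← cl_isLeft, hcl] at hL
    exact absurd hL (by simp)
  rw [Finset.sum_congr rfl (fun i _ => h1 i), Finset.sum_congr rfl (fun j _ => h2 j)]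
  simp [XL]

lemma filter_isRight_card (C : Finset (BinV k H n a)) :
    #(C.filter fun v => v.isLeft = false) = YR C := by
  rw [Finset.card_eq_sum_card_fiberwise
    (f := fun v : BinV k H n a => cl v) (t := univ) (fun v _ => mem_univ _),
    Fintype.sum_sum_type]
  have h1 : ∀ j : Fin n,
      #((C.filter fun v => v.isLeft = false).filter fun v => cl v = Sum.inr j)
        = fib C (Sum.inr j) := by
    intro j
    rw [Finset.filter_filter]
    congr 1
    apply Finset.filter_congr
    intro v _
    constructor
    · exact fun h => h.2
    · intro h
      refine ⟨?_, h⟩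
      rw [← cl_isLeft, h]; rfl
  have h2 : ∀ i : Fin k,
      #((C.filter fun v => v.isLeft = false).filter fun v => cl v = Sum.inl i) = 0 := by
    intro i
    rw [Finset.filter_filter, Finset.card_eq_zero, Finset.filter_eq_empty_iff]
    rintro v _ ⟨hL, hcl⟩
    rw [← cl_isLeft, hcl] at hL
    exact absurd hL (by simp)
  rw [Finset.sum_congr rfl (fun i _ => h2 i), Finset.sum_congr rfl (fun j _ => h1 j)]
  simp [YR]

lemma deg_in (C : Finset (BinV k H n a)) (u : BinV k H n a) (hu : u ∈ C) :
    #(C.filter fun v => (binGraph k H n a).Adj u v) + 1 =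
      fib C (cl u) + #(C.filter fun v => v.isLeft ≠ u.isLeft) := by
  have hsplit : C.filter (fun v => (binGraph k H n a).Adj u v) =
      ((C.filter fun v => cl v = cl u).erase u) ∪
        (C.filter fun v => v.isLeft ≠ u.isLeft) := by
    ext v
    simp only [mem_filter, mem_union, mem_erase, adj_iff]
    constructor
    · rintro ⟨hvC, hne, hcl | hL⟩
      · exact Or.inl ⟨hne, hvC, hcl⟩
      · exact Or.inr ⟨hvC, hL⟩
    · rintro (⟨hne, hvC, hcl⟩ | ⟨hvC, hL⟩)
      · exact ⟨hvC, hne, Or.inl hcl⟩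
      · exact ⟨hvC, fun h => hL (by rw [h]), Or.inr hL⟩
  have hdisj : Disjoint ((C.filter fun v => cl v = cl u).erase u)
      (C.filter fun v => v.isLeft ≠ u.isLeft) := by
    rw [Finset.disjoint_left]
    rintro v hv1 hv2
    have hcl : cl v = cl u := (Finset.mem_filter.1 (Finset.mem_of_mem_erase hv1)).2
    have hL : v.isLeft ≠ u.isLeft := (Finset.mem_filter.1 hv2).2
    apply hL
    rw [← cl_isLeft, ← cl_isLeft u, hcl]
  have hmem : u ∈ C.filter fun v => cl v = cl u := Finset.mem_filter.2 ⟨hu, rfl⟩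
  have hfibpos : 1 ≤ fib C (cl u) := Finset.card_pos.2 ⟨u, hmem⟩
  rw [hsplit, Finset.card_union_of_disjoint hdisj, Finset.card_erase_of_mem hmem]
  have hfib : fib C (cl u) = #(C.filter fun v => cl v = cl u) := rfl
  omega

lemma ein_card (C : Finset (BinV k H n a)) :
    #((C ×ˢ C).filter fun p => (binGraph k H n a).Adj p.1 p.2) + #C =
      (∑ bl, fib C bl ^ 2) + 2 * (XL C * YR C) := by
  rw [pair_card]
  have h0 : #C = ∑ _u ∈ C, 1 := Finset.card_eq_sum_ones C
  rw [h0, ← Finset.sum_add_distrib, Finset.sum_congr rfl (fun u hu => deg_in C u hu),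
    Finset.sum_add_distrib]
  congr 1
  · -- ∑ u ∈ C, fib C (cl u) = ∑ bl, fib C bl ^ 2
    rw [← Finset.sum_fiberwise' C cl (fib C)]
    apply Finset.sum_congr rfl
    intro bl _
    rw [Finset.sum_const, smul_eq_mul, sq]
    rfl
  · -- ∑ u ∈ C, opp u = 2 * (XL C * YR C)
    rw [← Finset.sum_filter_add_sum_filter_not C (fun u => u.isLeft = true)]
    have hL : ∀ u ∈ C.filter (fun u => u.isLeft = true),
        #(C.filter fun v => v.isLeft ≠ u.isLeft) = YR C := by
      intro u hu
      rw [(Finset.mem_filter.1 hu).2, ← filter_isRight_card]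
      congr 1
      apply Finset.filter_congr
      intro v _
      simp
    have hR : ∀ u ∈ C.filter (fun u => ¬(u.isLeft = true)),
        #(C.filter fun v => v.isLeft ≠ u.isLeft) = XL C := by
      intro u hu
      have hnot := (Finset.mem_filter.1 hu).2
      have : u.isLeft = false := by cases u <;> simp_all
      rw [this, ← filter_isLeft_card]
      congr 1
      apply Finset.filter_congr
      intro v _
      simp
    rw [Finset.sum_congr rfl hL, Finset.sum_congr rfl hR, Finset.sum_const,
      Finset.sum_const, smul_eq_mul, smul_eq_mul, filter_isLeft_card]
    have : #(C.filter fun u => ¬(u.isLeft = true)) = YR C := by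
      rw [← filter_isRight_card]
      congr 1
      apply Finset.filter_congr
      intro v _
      simp
    rw [this]
    ring

lemma diag_card {α : Type*} [DecidableEq α] (C : Finset α) :
    #((C ×ˢ C).filter fun p => p.1 = p.2) = #C := by
  rw [pair_card C (fun u v => u = v)]
  have : ∀ u ∈ C, #(C.filter fun v => u = v) = 1 := by
    intro u hu
    rw [Finset.filter_eq, if_pos hu, Finset.card_singleton]
  rw [Finset.sum_congr rfl this]
  simp

lemma fib_univ_inl (i : Fin k) : fib (univ : Finset (BinV k H n a)) (Sum.inl i) = H := by
  have : (univ : Finset (BinV k H n a)).filter (fun v => cl v = Sum.inl i)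
      = (univ : Finset (Fin H)).image (fun w => (Sum.inl (i, w) : BinV k H n a)) := by
    ext v
    simp only [mem_filter, mem_univ, true_and, mem_image]
    constructor
    · intro hcl
      rcases v with ⟨i', w⟩ | x
      · have : i' = i := by simpa [cl] using hcl
        subst this
        exact ⟨w, rfl⟩
      · simp [cl] at hcl
    · rintro ⟨w, rfl⟩
      rfl
  rw [fib, this, Finset.card_image_of_injective _ (fun w1 w2 h => by simpa using h)]
  simp

lemma fib_univ_inr (j : Fin n) : fib (univ : Finset (BinV k H n a)) (Sum.inr j) = a j := by
  have : (univ : Finset (BinV k H n a)).filter (fun v => cl v = Sum.inr j)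
      = (univ : Finset (Fin (a j))).image (fun w => (Sum.inr ⟨j, w⟩ : BinV k H n a)) := by
    ext v
    simp only [mem_filter, mem_univ, true_and, mem_image]
    constructor
    · intro hcl
      rcases v with x | ⟨j', w⟩
      · simp [cl] at hcl
      · have : j' = j := by simpa [cl] using hcl
        subst this
        exact ⟨w, rfl⟩
    · rintro ⟨w, rfl⟩
      rfl
  rw [fib, this, Finset.card_image_of_injective _ (fun w1 w2 h => by simpa using h)]
  simp

variable (𝒞 : Finpartition (univ : Finset (BinV k H n a)))

lemma sum_parts_fib (bl : Fin k ⊕ Fin n) :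
    ∑ C ∈ 𝒞.parts, fib C bl = fib (univ : Finset (BinV k H n a)) bl := by
  have h := Finset.card_eq_sum_card_fiberwise
    (f := fun v : BinV k H n a => 𝒞.part v)
    (s := (univ : Finset (BinV k H n a)).filter fun v => cl v = bl) (t := 𝒞.parts)
    (fun v _ => 𝒞.part_mem.2 (mem_univ v))
  rw [fib, h]
  apply Finset.sum_congr rfl
  intro C hC
  rw [Finset.filter_filter, fib]
  congr 1
  ext v
  simp only [mem_filter, mem_univ, true_and]
  constructor
  · intro hv
    exact ⟨hv.2, 𝒞.part_eq_of_mem hC hv.1⟩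
  · intro hv
    exact ⟨(hv.2 ▸ 𝒞.mem_part (mem_univ v) : v ∈ C), hv.1⟩

/-- two vertices lie in a common part -/
def SameP (u v : BinV k H n a) : Prop := ∃ C ∈ 𝒞.parts, u ∈ C ∧ v ∈ C

instance : DecidableRel (SameP 𝒞) := fun _ _ =>
  Finset.decidableExistsAndFinset

lemma sum_parts_pairs (R : BinV k H n a → BinV k H n a → Prop) [DecidableRel R] :
    #((univ ×ˢ univ : Finset (BinV k H n a × BinV k H n a)).filter
        fun p => R p.1 p.2 ∧ SameP 𝒞 p.1 p.2)
      = ∑ C ∈ 𝒞.parts, #((C ×ˢ C).filter fun p => R p.1 p.2) := by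
  rw [Finset.card_eq_sum_card_fiberwise
    (f := fun p : BinV k H n a × BinV k H n a => 𝒞.part p.1) (t := 𝒞.parts)
    (fun p _ => 𝒞.part_mem.2 (mem_univ _))]
  apply Finset.sum_congr rfl
  intro C hC
  congr 1
  ext ⟨u, v⟩
  simp only [mem_filter, mem_product, mem_univ, true_and, and_true]
  constructor
  · rintro ⟨⟨hR, C', hC', hu, hv⟩, hpart⟩
    have hCC : C' = C := by rw [← 𝒞.part_eq_of_mem hC' hu, hpart]
    subst hCC
    exact ⟨⟨hu, hv⟩, hR⟩
  · rintro ⟨⟨hu, hv⟩, hR⟩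
    exact ⟨⟨hR, C, hC, hu, hv⟩, 𝒞.part_eq_of_mem hC hu⟩

/-- the graph of cut edges -/
def G1 : SimpleGraph (BinV k H n a) where
  Adj u v := (binGraph k H n a).Adj u v ∧ ¬ SameP 𝒞 u v
  symm := by
    constructor
    rintro u v ⟨h1, h2⟩
    exact ⟨h1.symm, fun ⟨C, hC, hv, hu⟩ => h2 ⟨C, hC, hu, hv⟩⟩
  loopless := ⟨fun u h => (binGraph k H n a).loopless.irrefl u h.1⟩

/-- the graph of non-adjacent pairs inside parts -/
def G2 : SimpleGraph (BinV k H n a) where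
  Adj u v := u ≠ v ∧ ¬ (binGraph k H n a).Adj u v ∧ SameP 𝒞 u v
  symm := by
    constructor
    rintro u v ⟨hne, hnadj, C, hC, hu, hv⟩
    exact ⟨hne.symm, fun h => hnadj h.symm, C, hC, hv, hu⟩
  loopless := ⟨fun u h => h.1 rfl⟩

instance : DecidableRel (G1 𝒞).Adj := fun u v =>
  inferInstanceAs (Decidable (_ ∧ _))

instance : DecidableRel (G2 𝒞).Adj := fun u v =>
  inferInstanceAs (Decidable (_ ∧ _))

lemma cost_eq : cost (binGraph k H n a) 𝒞 = #(G1 𝒞).edgeFinset + #(G2 𝒞).edgeFinset := by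
  rw [cost, costOn]
  congr 1
  · have hset : {e : Sym2 (BinV k H n a) | e ∈ (binGraph k H n a).edgeSet ∧
        (∀ v ∈ e, v ∈ (univ : Finset (BinV k H n a))) ∧ ¬ ∃ C ∈ 𝒞.parts, ∀ v ∈ e, v ∈ C}
        = (G1 𝒞).edgeSet := by
      ext e
      refine Sym2.ind (fun u v => ?_) e
      simp only [Set.mem_setOf_eq, SimpleGraph.mem_edgeSet]
      show _ ↔ ((binGraph k H n a).Adj u v ∧ ¬ SameP 𝒞 u v)
      constructor
      · rintro ⟨hadj, -, hnot⟩
        refine ⟨hadj, ?_⟩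
        rintro ⟨C, hC, hu, hv⟩
        exact hnot ⟨C, hC, fun w hw => by
          rcases Sym2.mem_iff.1 hw with rfl | rfl
          exacts [hu, hv]⟩
      · rintro ⟨hadj, hnot⟩
        refine ⟨hadj, fun w _ => mem_univ w, ?_⟩
        rintro ⟨C, hC, hall⟩
        exact hnot ⟨C, hC, hall u (Sym2.mem_mk_left u v), hall v (Sym2.mem_mk_right u v)⟩
    rw [hset, ← SimpleGraph.coe_edgeFinset, Set.ncard_coe_finset]
  · have hset : {e : Sym2 (BinV k H n a) | e ∈ (binGraph k H n a)ᶜ.edgeSet ∧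
        ∃ C ∈ 𝒞.parts, ∀ v ∈ e, v ∈ C} = (G2 𝒞).edgeSet := by
      ext e
      refine Sym2.ind (fun u v => ?_) e
      simp only [Set.mem_setOf_eq, SimpleGraph.mem_edgeSet, SimpleGraph.compl_adj]
      show _ ↔ (u ≠ v ∧ ¬ (binGraph k H n a).Adj u v ∧ SameP 𝒞 u v)
      constructor
      · rintro ⟨⟨hne, hnadj⟩, C, hC, hall⟩
        exact ⟨hne, hnadj,
          C, hC, hall u (Sym2.mem_mk_left u v), hall v (Sym2.mem_mk_right u v)⟩
      · rintro ⟨hne, hnadj, C, hC, hu, hv⟩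
        refine ⟨⟨hne, hnadj⟩, C, hC, fun w hw => ?_⟩
        rcases Sym2.mem_iff.1 hw with rfl | rfl
        exacts [hu, hv]
    rw [hset, ← SimpleGraph.coe_edgeFinset, Set.ncard_coe_finset]

lemma two_cost :
    2 * cost (binGraph k H n a) 𝒞
      + 2 * (∑ C ∈ 𝒞.parts, #((C ×ˢ C).filter fun p => (binGraph k H n a).Adj p.1 p.2))
      + #(univ : Finset (BinV k H n a))
    = #((univ ×ˢ univ : Finset (BinV k H n a × BinV k H n a)).filter
          fun p => (binGraph k H n a).Adj p.1 p.2)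
      + ∑ C ∈ 𝒞.parts, #C * #C := by
  have h1 : 2 * #(G1 𝒞).edgeFinset =
      #((univ ×ˢ univ : Finset (BinV k H n a × BinV k H n a)).filter
        fun p => (binGraph k H n a).Adj p.1 p.2 ∧ ¬ SameP 𝒞 p.1 p.2) := by
    rw [SimpleGraph.two_mul_card_edgeFinset, ← Finset.univ_product_univ]
    congr 1
  have h2 : 2 * #(G2 𝒞).edgeFinset =
      #((univ ×ˢ univ : Finset (BinV k H n a × BinV k H n a)).filter
        fun p => (¬ (p.1 = p.2) ∧ ¬ (binGraph k H n a).Adj p.1 p.2) ∧ SameP 𝒞 p.1 p.2) := by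
    rw [SimpleGraph.two_mul_card_edgeFinset, ← Finset.univ_product_univ]
    rw [Finset.filter_congr (q := fun p : BinV k H n a × BinV k H n a =>
      (¬ (p.1 = p.2) ∧ ¬ (binGraph k H n a).Adj p.1 p.2) ∧ SameP 𝒞 p.1 p.2)
      (fun p _ => by show (G2 𝒞).Adj p.1 p.2 ↔ _; show (_ ∧ _ ∧ _) ↔ _; tauto)]
  have hsplitAdj := Finset.card_filter_add_card_filter_not
    (s := (univ ×ˢ univ : Finset (BinV k H n a × BinV k H n a)).filter
      fun p => (binGraph k H n a).Adj p.1 p.2)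
    (p := fun p => SameP 𝒞 p.1 p.2)
  rw [Finset.filter_filter, Finset.filter_filter] at hsplitAdj
  have hSame := sum_parts_pairs 𝒞 (fun u v => (binGraph k H n a).Adj u v)
  have hNon := sum_parts_pairs 𝒞 (fun u v => ¬ (u = v) ∧ ¬ (binGraph k H n a).Adj u v)
  have hparts : ∀ C ∈ 𝒞.parts,
      #((C ×ˢ C).filter fun p => ¬ (p.1 = p.2) ∧ ¬ (binGraph k H n a).Adj p.1 p.2)
        + #((C ×ˢ C).filter fun p => (binGraph k H n a).Adj p.1 p.2) + #C = #C * #C := by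
    intro C _
    have e1 := Finset.card_filter_add_card_filter_not
      (s := (C ×ˢ C)) (p := fun p : BinV k H n a × BinV k H n a => p.1 = p.2)
    rw [diag_card, Finset.card_product] at e1
    have e2 := Finset.card_filter_add_card_filter_not
      (s := (C ×ˢ C).filter fun p : BinV k H n a × BinV k H n a => ¬ (p.1 = p.2))
      (p := fun p => (binGraph k H n a).Adj p.1 p.2)
    rw [Finset.filter_filter, Finset.filter_filter] at e2
    rw [Finset.filter_congr (q := fun p : BinV k H n a × BinV k H n a =>
      (binGraph k H n a).Adj p.1 p.2)
      (fun p _ => ⟨fun h => h.2, fun h => ⟨fun he => (binGraph k H n a).ne_of_adj h he, h⟩⟩)]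
      at e2
    omega
  have hsum : ∑ C ∈ 𝒞.parts, #C * #C =
      (∑ C ∈ 𝒞.parts, #((C ×ˢ C).filter fun p => ¬ (p.1 = p.2) ∧
        ¬ (binGraph k H n a).Adj p.1 p.2))
      + (∑ C ∈ 𝒞.parts, #((C ×ˢ C).filter fun p => (binGraph k H n a).Adj p.1 p.2))
      + #(univ : Finset (BinV k H n a)) := by
    rw [← 𝒞.sum_card_parts, ← Finset.sum_add_distrib, ← Finset.sum_add_distrib]
    exact (Finset.sum_congr rfl (fun C hC => hparts C hC)).symm
  rw [cost_eq, Nat.mul_add, h1, h2, hsum, ← hSame, ← hNon]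
  omega

end Graph

theorem statement1 (k n b H t : ℕ) (a : Fin n → ℕ)
    (hk : 10 ≤ k) (hn : 10 ≤ n) (hb : 1 ≤ b)
    (hpos : ∀ j, 1 ≤ a j) (hub : ∀ j, a j ≤ b)
    (hsum : ∑ j, a j = k * b)
    (hH : H = (n * k * ∑ j, a j) ^ 10)
    (ht : t = (k - 1) * (∑ j, a j) * H + (k * b ^ 2 - ∑ j, a j ^ 2) / 2)
    (𝒞 : Finpartition (univ : Finset (BinV k H n a))) :
    t ≤ cost (binGraph k H n a) 𝒞 := by
  -- s2 ≤ k b²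
  have hs2le : ∑ j, a j ^ 2 ≤ k * b ^ 2 := by
    have h1 : ∑ j, a j ^ 2 ≤ ∑ j, a j * b := by
      apply Finset.sum_le_sum
      intro j _
      rw [sq]
      exact Nat.mul_le_mul_left _ (hub j)
    rw [← Finset.sum_mul, hsum] at h1
    calc ∑ j, a j ^ 2 ≤ k * b * b := h1
      _ = k * b ^ 2 := by ring
  -- parity
  have hsqmod : ∀ m : ℕ, m ^ 2 % 2 = m % 2 := by
    intro m
    rcases Nat.mod_two_eq_zero_or_one m with h | h <;>
      rw [Nat.pow_mod, h] <;> rfl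
  have hs2mod : (∑ j, a j ^ 2) % 2 = (k * b) % 2 := by
    rw [Finset.sum_nat_mod]
    rw [Finset.sum_congr rfl (fun j _ => hsqmod (a j)), ← Finset.sum_nat_mod, hsum]
  have hkbmod : (k * b ^ 2) % 2 = (k * b) % 2 := by
    conv_lhs => rw [Nat.mul_mod, hsqmod b, ← Nat.mul_mod]
  -- 2t
  have h2t : 2 * t = 2 * ((k - 1) * (∑ j, a j) * H) + (k * b ^ 2 - ∑ j, a j ^ 2) := by
    rw [ht]; omega
  -- H bounds
  have hkb10 : 10 ≤ k * b := le_trans hk (Nat.le_mul_of_pos_right k hb)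
  have hqge : k * b ≤ n * k * ∑ j, a j := by
    rw [hsum]
    calc k * b = 1 * (k * b) := (one_mul _).symm
      _ ≤ n * k * (k * b) := by
          apply Nat.mul_le_mul_right
          have : 0 < n * k := by positivity
          omega
  have hbase : 1 ≤ n * k * ∑ j, a j := le_trans (by omega) hqge
  have hq2 : (n * k * ∑ j, a j) ^ 2 ≤ H := by
    rw [hH]
    exact Nat.pow_le_pow_right hbase (by norm_num)
  have hkb2H : (k * b) * (k * b) ≤ H := by
    calc (k * b) * (k * b) ≤ (n * k * ∑ j, a j) * (n * k * ∑ j, a j) :=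
          Nat.mul_le_mul hqge hqge
      _ = (n * k * ∑ j, a j) ^ 2 := (sq _).symm
      _ ≤ H := hq2
  have hH1 : 2 * (k * b) ≤ H := by nlinarith
  have hH2 : k * b ^ 2 ≤ H := by nlinarith
  -- global counts
  have hfibU : ∑ bl, fib (univ : Finset (BinV k H n a)) bl ^ 2
      = k * H ^ 2 + ∑ j, a j ^ 2 := by
    rw [Fintype.sum_sum_type]
    simp only [fib_univ_inl, fib_univ_inr]
    rw [Finset.sum_const, card_univ, Fintype.card_fin, smul_eq_mul]
  have hXLu : XL (univ : Finset (BinV k H n a)) = k * H := by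
    rw [XL]
    simp only [fib_univ_inl]
    rw [Finset.sum_const, card_univ, Fintype.card_fin, smul_eq_mul]
  have hYRu : YR (univ : Finset (BinV k H n a)) = ∑ j, a j := by
    rw [YR]
    simp only [fib_univ_inr]
  -- counting identity
  have hcount := two_cost 𝒞
  have heinU := ein_card (univ : Finset (BinV k H n a))
  rw [hfibU, hXLu, hYRu] at heinU
  -- per part identity in ℤ
  have hpp : ∀ C ∈ 𝒞.parts, ((#C : ℤ) * #C) =
      ((XL C : ℤ) - YR C) ^ 2 - 2 * (∑ bl, (fib C bl : ℤ) ^ 2) + 2 * (#C : ℤ)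
      + 2 * (#((C ×ˢ C).filter fun p => (binGraph k H n a).Adj p.1 p.2) : ℤ) := by
    intro C _
    have h0 := ein_card C
    zify at h0
    have hN : (#C : ℤ) = (XL C : ℤ) + YR C := by exact_mod_cast card_eq_XL_add_YR C
    linear_combination (-2 : ℤ) * h0 + ((#C : ℤ) + XL C + YR C) * hN
  have hppsum : (∑ C ∈ 𝒞.parts, (#C : ℤ) * #C) =
      (∑ C ∈ 𝒞.parts, ((XL C : ℤ) - YR C) ^ 2)
      - 2 * (∑ C ∈ 𝒞.parts, ∑ bl, (fib C bl : ℤ) ^ 2)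
      + 2 * (∑ C ∈ 𝒞.parts, (#C : ℤ))
      + 2 * (∑ C ∈ 𝒞.parts,
          (#((C ×ˢ C).filter fun p => (binGraph k H n a).Adj p.1 p.2) : ℤ)) := by
    rw [Finset.sum_congr rfl hpp]
    rw [Finset.sum_add_distrib, Finset.sum_add_distrib, Finset.sum_sub_distrib,
      ← Finset.mul_sum, ← Finset.mul_sum, ← Finset.mul_sum]
  have hsumcard : (∑ C ∈ 𝒞.parts, (#C : ℤ)) = (#(univ : Finset (BinV k H n a)) : ℤ) := by
    rw [← Nat.cast_sum, 𝒞.sum_card_parts]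
  -- numeric lemma application
  have hcol : ∀ i : Fin k, ∑ C ∈ 𝒞.parts, fib C (Sum.inl i) = H := by
    intro i
    rw [sum_parts_fib 𝒞 (Sum.inl i), fib_univ_inl]
  have hYsum : ∑ C ∈ 𝒞.parts, YR C = k * b := by
    rw [← hsum]
    unfold YR
    rw [Finset.sum_comm]
    exact Finset.sum_congr rfl
      (fun j _ => by rw [sum_parts_fib 𝒞 (Sum.inr j), fib_univ_inr])
  have hnum := numeric 𝒞.parts k b H (by omega) hb hH1 hH2
    (fun C i => fib C (Sum.inl i)) YR hcol hYsum
  have hXLC : ∀ C ∈ 𝒞.parts, ((∑ i, (fib C (Sum.inl i) : ℤ)) - (YR C : ℤ)) ^ 2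
      = ((XL C : ℤ) - YR C) ^ 2 := by
    intro C _
    have h0 : (∑ i, (fib C (Sum.inl i) : ℤ)) = (XL C : ℤ) := by
      rw [XL]
      push_cast
      ring
    rw [h0]
  rw [Finset.sum_congr rfl hXLC] at hnum
  beta_reduce at hnum
  have hQx : (∑ i : Fin k, ((H : ℤ) ^ 2 - ∑ C ∈ 𝒞.parts, (fib C (Sum.inl i) : ℤ) ^ 2))
      = (k : ℤ) * (H : ℤ) ^ 2 - ∑ C ∈ 𝒞.parts, ∑ i, (fib C (Sum.inl i) : ℤ) ^ 2 := by
    rw [Finset.sum_sub_distrib, Finset.sum_const, Finset.card_univ, Fintype.card_fin,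
      nsmul_eq_mul, Finset.sum_comm]
  rw [hQx] at hnum
  -- Q split and Qy bound
  have hQeq : (∑ C ∈ 𝒞.parts, ∑ bl, (fib C bl : ℤ) ^ 2)
      = (∑ C ∈ 𝒞.parts, ∑ i, (fib C (Sum.inl i) : ℤ) ^ 2)
      + (∑ C ∈ 𝒞.parts, ∑ j, (fib C (Sum.inr j) : ℤ) ^ 2) := by
    rw [Finset.sum_congr rfl
      (fun C (_ : C ∈ 𝒞.parts) => Fintype.sum_sum_type (fun bl => (fib C bl : ℤ) ^ 2)),
      Finset.sum_add_distrib]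
  have hQy : (∑ C ∈ 𝒞.parts, ∑ j, (fib C (Sum.inr j) : ℤ) ^ 2)
      ≤ ∑ j, (a j : ℤ) ^ 2 := by
    rw [Finset.sum_comm]
    apply Finset.sum_le_sum
    intro j _
    have h1 : ∑ C ∈ 𝒞.parts, (fib C (Sum.inr j) : ℤ) ^ 2
        ≤ (∑ C ∈ 𝒞.parts, (fib C (Sum.inr j) : ℤ)) ^ 2 :=
      sum_sq_le_sq_sum_of_nonneg (fun C _ => Int.natCast_nonneg _)
    have h2 : (∑ C ∈ 𝒞.parts, (fib C (Sum.inr j) : ℤ)) = ((a j : ℕ) : ℤ) := by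
      rw [← Nat.cast_sum, sum_parts_fib 𝒞 (Sum.inr j), fib_univ_inr]
    rw [h2] at h1
    exact h1
  -- final arithmetic in ℤ
  have hA' : (∑ j, (a j : ℤ)) = (k : ℤ) * b := by exact_mod_cast hsum
  have hcount' : (2 * (cost (binGraph k H n a) 𝒞 : ℤ))
      + 2 * (∑ C ∈ 𝒞.parts,
          (#((C ×ˢ C).filter fun p => (binGraph k H n a).Adj p.1 p.2) : ℤ))
      + (#(univ : Finset (BinV k H n a)) : ℤ)
      = (#((univ ×ˢ univ : Finset (BinV k H n a × BinV k H n a)).filter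
            fun p => (binGraph k H n a).Adj p.1 p.2) : ℤ)
        + ∑ C ∈ 𝒞.parts, (#C : ℤ) * #C := by
    zify at hcount
    linear_combination hcount
  have heinU' : (#((univ ×ˢ univ : Finset (BinV k H n a × BinV k H n a)).filter
        fun p => (binGraph k H n a).Adj p.1 p.2) : ℤ)
      + (#(univ : Finset (BinV k H n a)) : ℤ)
      = ((k : ℤ) * H ^ 2 + ∑ j, (a j : ℤ) ^ 2)
        + 2 * ((k : ℤ) * H * ((k : ℤ) * b)) := by
    zify at heinU
    linear_combination heinU + 2 * (k : ℤ) * (H : ℤ) * hA'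
  have h2t' : (2 * (t : ℤ)) = 2 * ((k : ℤ) - 1) * ((k : ℤ) * b) * H
      + ((k : ℤ) * b ^ 2 - ∑ j, (a j : ℤ) ^ 2) := by
    have hk1 : 1 ≤ k := by omega
    zify [hs2le, hk1] at h2t
    linear_combination h2t + 2 * ((k : ℤ) - 1) * (H : ℤ) * hA'
  have hfinal : (2 * (t : ℤ)) ≤ 2 * (cost (binGraph k H n a) 𝒞 : ℤ) := by
    rw [h2t']
    linarith [hnum, hQy, hcount', heinU', hppsum, hsumcard, hQeq]
  have hfin2 : 2 * t ≤ 2 * cost (binGraph k H n a) 𝒞 := by exact_mod_cast hfinal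
  omega


end ClusterEditing
end

section
/- Let k, n ≥ 10, b ≥ 1 and a_1, …, a_n be positive integers with a_j ≤ b for all j and Σ_j a_j = k·b, and let G be the associated construction with a = Σ_j a_j, s = Σ_j a_j², h = (n·k·a)^{10}. Let 𝒞 = {P_1, …, P_k} be a clustering of G with exactly k parts such that B_i ⊆ P_i for each i ∈ [k] and such that each A_j is entirely contained in some part. Then cost_G(𝒞) = (k−1)·a·h + (1/2)·Σ_{i=1}^{k} |W_i|² − s/2, where W_i = P_i \ B_i. -/
open Finset

universe u

namespace ClusterEditing




variable {V : Type u}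

section Helpers

variable {W : Type u}

/-- Auxiliary graph: edges of `G` crossing the partition classes of `f`. -/
def crossG (G : SimpleGraph W) {k : ℕ} (f : W → Fin k) : SimpleGraph W where
  Adj u v := G.Adj u v ∧ f u ≠ f v
  symm := by constructor; rintro u v ⟨h1, h2⟩; exact ⟨h1.symm, h2.symm⟩
  loopless := by constructor; rintro u ⟨h1, _⟩; exact G.irrefl h1

/-- Auxiliary graph: non-edges of `G` inside partition classes of `f`. -/
def innerG (G : SimpleGraph W) {k : ℕ} (f : W → Fin k) : SimpleGraph W where
  Adj u v := (u ≠ v ∧ ¬ G.Adj u v) ∧ f u = f v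
  symm := by constructor; rintro u v ⟨⟨h1, h2⟩, h3⟩; exact ⟨⟨h1.symm, fun h => h2 h.symm⟩, h3.symm⟩
  loopless := by constructor; rintro u ⟨⟨h1, _⟩, _⟩; exact h1 rfl

lemma two_mul_ncard_edgeSet [Fintype W] (G' : SimpleGraph W) [DecidableRel G'.Adj] :
    2 * G'.edgeSet.ncard = ∑ u : W, ∑ v : W, if G'.Adj u v then 1 else 0 := by
  classical
  have h1 : G'.edgeSet.ncard = G'.edgeFinset.card := by
    rw [SimpleGraph.edgeFinset]
    exact Set.ncard_eq_toFinset_card' _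
  rw [h1, SimpleGraph.two_mul_card_edgeFinset, Finset.card_filter, Fintype.sum_prod_type]

lemma sum_ite_ne {k : ℕ} (c : Fin k) (t : ℕ) :
    ∑ i : Fin k, (if i ≠ c then t else 0) = (k - 1) * t := by
  rw [Finset.sum_ite, Finset.sum_const, Finset.sum_const, smul_eq_mul, smul_eq_mul,
    mul_zero, add_zero, Finset.filter_ne', Finset.card_erase_of_mem (Finset.mem_univ c),
    Finset.card_univ, Fintype.card_fin]

lemma sq_sum_ite {k n : ℕ} (σ : Fin n → Fin k) (a : Fin n → ℕ) :
    ∑ i : Fin k, (∑ j : Fin n, if σ j = i then a j else 0) ^ 2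
      = ∑ j : Fin n, ∑ j' : Fin n, if σ j = σ j' then a j * a j' else 0 := by
  have h1 : ∀ i : Fin k, (∑ j, if σ j = i then a j else 0)^2
      = ∑ j, ∑ j', if σ j = i ∧ σ j' = i then a j * a j' else 0 := by
    intro i
    rw [sq, Finset.sum_mul_sum]
    refine Finset.sum_congr rfl fun j _ => Finset.sum_congr rfl fun j' _ => ?_
    by_cases h1 : σ j = i <;> by_cases h2 : σ j' = i <;> simp [h1, h2]
  simp only [h1]
  rw [Finset.sum_comm]
  refine Finset.sum_congr rfl fun j _ => ?_
  rw [Finset.sum_comm]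
  refine Finset.sum_congr rfl fun j' _ => ?_
  by_cases h : σ j = σ j'
  · rw [if_pos h, ← h]
    simp
  · rw [if_neg h]
    refine Finset.sum_eq_zero fun i _ => if_neg ?_
    rintro ⟨h1, h2⟩
    exact h (h1.trans h2.symm)

end Helpers

lemma sum_binV {k h n : ℕ} {a : Fin n → ℕ} (f : BinV k h n a → ℕ) :
    ∑ v : BinV k h n a, f v =
      (∑ i : Fin k, ∑ x : Fin h, f (Sum.inl (i, x))) +
      ∑ j : Fin n, ∑ y : Fin (a j), f (Sum.inr ⟨j, y⟩) := by
  rw [Fintype.sum_sum_type, Fintype.sum_prod_type, ← Finset.univ_sigma_univ, Finset.sum_sigma]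

theorem statement3 (k n b H : ℕ) (a : Fin n → ℕ)
    (hk : 10 ≤ k) (hn : 10 ≤ n) (hb : 1 ≤ b)
    (hpos : ∀ j, 1 ≤ a j) (hub : ∀ j, a j ≤ b)
    (hsum : ∑ j, a j = k * b)
    (hH : H = (n * k * ∑ j, a j) ^ 10)
    (P : Fin k → Finset (BinV k H n a)) (hPinj : Function.Injective P)
    (𝒞 : Finpartition (univ : Finset (BinV k H n a)))
    (hparts : 𝒞.parts = (univ : Finset (Fin k)).image P)
    (hB : ∀ i : Fin k, Bset k H n a i ⊆ P i)
    (hA : ∀ j : Fin n, ∃ C ∈ 𝒞.parts, Aset k H n a j ⊆ C) :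
    2 * cost (binGraph k H n a) 𝒞 + ∑ j, a j ^ 2 =
      2 * ((k - 1) * (∑ j, a j) * H) + ∑ i : Fin k, (P i \ Bset k H n a i).card ^ 2 := by
  classical
  -- choose, for each j, the index of the part containing A_j
  have hA' : ∀ j : Fin n, ∃ i : Fin k, Aset k H n a j ⊆ P i := by
    intro j
    obtain ⟨C, hC, hsub⟩ := hA j
    rw [hparts, Finset.mem_image] at hC
    obtain ⟨i, -, rfl⟩ := hC
    exact ⟨i, hsub⟩
  choose σ hσ using hA'
  set f : BinV k H n a → Fin k := Sum.elim (fun x => x.1) (fun x => σ x.1) with hf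
  have hmem : ∀ v : BinV k H n a, v ∈ P (f v) := by
    rintro (⟨i, x⟩ | ⟨j, y⟩)
    · exact hB i (by simp [Bset])
    · exact hσ j (by simp [Aset])
  have hdisj : ∀ i i' : Fin k, i ≠ i' → Disjoint (P i) (P i') := by
    intro i i' hne
    exact 𝒞.disjoint (by rw [hparts]; exact Finset.mem_image_of_mem P (Finset.mem_univ i))
      (by rw [hparts]; exact Finset.mem_image_of_mem P (Finset.mem_univ i'))
      (fun h => hne (hPinj h))
  have hmemiff : ∀ (v : BinV k H n a) (i : Fin k), v ∈ P i ↔ f v = i := by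
    intro v i
    constructor
    · intro hv
      by_contra hne
      exact (Finset.disjoint_left.mp (hdisj _ _ hne) (hmem v)) hv
    · rintro rfl; exact hmem v
  have hcond : ∀ u v : BinV k H n a, (∃ C ∈ 𝒞.parts, u ∈ C ∧ v ∈ C) ↔ f u = f v := by
    intro u v
    constructor
    · rintro ⟨C, hC, hu, hv⟩
      rw [hparts, Finset.mem_image] at hC
      obtain ⟨i, -, rfl⟩ := hC
      rw [(hmemiff u i).mp hu, (hmemiff v i).mp hv]
    · intro h
      refine ⟨P (f u), by rw [hparts]; exact Finset.mem_image_of_mem P (Finset.mem_univ _),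
        hmem u, ?_⟩
      rw [h]; exact hmem v
  -- the two cost sets are edge sets of auxiliary graphs
  have hX : {e : Sym2 (BinV k H n a) | e ∈ (binGraph k H n a).edgeSet ∧
        (∀ v ∈ e, v ∈ (univ : Finset (BinV k H n a))) ∧
        ¬ ∃ C ∈ 𝒞.parts, ∀ v ∈ e, v ∈ C} = (crossG (binGraph k H n a) f).edgeSet := by
    ext e
    induction e using Sym2.ind with
    | _ u v =>
      show _ ∧ _ ∧ ¬ _ ↔ (binGraph k H n a).Adj u v ∧ f u ≠ f v
      simp only [SimpleGraph.mem_edgeSet, Sym2.mem_iff, Finset.mem_univ, implies_true,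
        true_and, forall_eq_or_imp, forall_eq]
      rw [show (∃ C ∈ 𝒞.parts, u ∈ C ∧ v ∈ C) ↔ f u = f v from hcond u v]
  have hY : {e : Sym2 (BinV k H n a) | e ∈ (binGraph k H n a)ᶜ.edgeSet ∧
        ∃ C ∈ 𝒞.parts, ∀ v ∈ e, v ∈ C} = (innerG (binGraph k H n a) f).edgeSet := by
    ext e
    induction e using Sym2.ind with
    | _ u v =>
      show _ ∧ _ ↔ (u ≠ v ∧ ¬ (binGraph k H n a).Adj u v) ∧ f u = f v
      simp only [SimpleGraph.mem_edgeSet, SimpleGraph.compl_adj, Sym2.mem_iff,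
        forall_eq_or_imp, forall_eq]
      rw [show (∃ C ∈ 𝒞.parts, u ∈ C ∧ v ∈ C) ↔ f u = f v from hcond u v]
  have hcost : 2 * cost (binGraph k H n a) 𝒞 =
      (∑ u : BinV k H n a, ∑ v : BinV k H n a,
        if (crossG (binGraph k H n a) f).Adj u v then 1 else 0) +
      (∑ u : BinV k H n a, ∑ v : BinV k H n a,
        if (innerG (binGraph k H n a) f).Adj u v then 1 else 0) := by
    rw [cost, costOn, Nat.left_distrib, hX, hY, two_mul_ncard_edgeSet, two_mul_ncard_edgeSet]
  -- count the crossing edges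
  have hN1 : (∑ u : BinV k H n a, ∑ v : BinV k H n a,
      if (crossG (binGraph k H n a) f).Adj u v then 1 else 0)
      = 2 * ((k - 1) * (∑ j, a j) * H) := by
    simp only [sum_binV]
    have T1 : ∀ (i : Fin k) (x : Fin H), (∑ i' : Fin k, ∑ x' : Fin H,
        if (crossG (binGraph k H n a) f).Adj (Sum.inl (i, x)) (Sum.inl (i', x'))
        then 1 else 0) = 0 := by
      refine fun i x => Finset.sum_eq_zero fun i' _ => Finset.sum_eq_zero fun x' _ => if_neg ?_
      rintro ⟨⟨-, hside⟩, hne⟩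
      exact hne hside
    have T2 : ∀ (i : Fin k) (x : Fin H), (∑ j : Fin n, ∑ y : Fin (a j),
        if (crossG (binGraph k H n a) f).Adj (Sum.inl (i, x)) (Sum.inr ⟨j, y⟩)
        then 1 else 0) = ∑ j : Fin n, if σ j ≠ i then a j else 0 := by
      intro i x
      refine Finset.sum_congr rfl fun j _ => ?_
      have h2 : ∀ y : Fin (a j),
          (if (crossG (binGraph k H n a) f).Adj (Sum.inl (i, x)) (Sum.inr ⟨j, y⟩)
            then (1:ℕ) else 0) = if σ j ≠ i then 1 else 0 := by
        intro y
        refine if_congr ⟨?_, ?_⟩ rfl rfl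
        · rintro ⟨-, hne⟩
          exact fun h => hne h.symm
        · intro h
          exact ⟨⟨by simp, trivial⟩, fun h' => h h'.symm⟩
      simp only [h2]
      rw [Finset.sum_const, Finset.card_univ, Fintype.card_fin, smul_eq_mul,
        mul_ite, mul_one, mul_zero]
    have T3 : ∀ (j : Fin n) (y : Fin (a j)), (∑ i : Fin k, ∑ x : Fin H,
        if (crossG (binGraph k H n a) f).Adj (Sum.inr ⟨j, y⟩) (Sum.inl (i, x))
        then 1 else 0) = ∑ i : Fin k, if i ≠ σ j then H else 0 := by
      intro j y
      refine Finset.sum_congr rfl fun i _ => ?_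
      have h3 : ∀ x : Fin H,
          (if (crossG (binGraph k H n a) f).Adj (Sum.inr ⟨j, y⟩) (Sum.inl (i, x))
            then (1:ℕ) else 0) = if i ≠ σ j then 1 else 0 := by
        intro x
        refine if_congr ⟨?_, ?_⟩ rfl rfl
        · rintro ⟨-, hne⟩
          exact fun h => hne h.symm
        · intro h
          exact ⟨⟨by simp, trivial⟩, fun h' => h h'.symm⟩
      simp only [h3]
      rw [Finset.sum_const, Finset.card_univ, Fintype.card_fin, smul_eq_mul,
        mul_ite, mul_one, mul_zero]
    have T4 : ∀ (j : Fin n) (y : Fin (a j)), (∑ j' : Fin n, ∑ y' : Fin (a j'),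
        if (crossG (binGraph k H n a) f).Adj (Sum.inr ⟨j, y⟩) (Sum.inr ⟨j', y'⟩)
        then 1 else 0) = 0 := by
      refine fun j y => Finset.sum_eq_zero fun j' _ => Finset.sum_eq_zero fun y' _ => if_neg ?_
      rintro ⟨⟨-, hside⟩, hne⟩
      exact hne (congrArg σ hside)
    simp only [T1, T2, T3, T4, zero_add, add_zero]
    have E1 : (∑ i : Fin k, ∑ _x : Fin H, ∑ j : Fin n, if σ j ≠ i then a j else 0)
        = (k - 1) * (∑ j, a j) * H := by
      have : ∀ i : Fin k, (∑ _x : Fin H, ∑ j : Fin n, if σ j ≠ i then a j else 0)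
          = H * ∑ j : Fin n, if σ j ≠ i then a j else 0 := by
        intro i
        rw [Finset.sum_const, Finset.card_univ, Fintype.card_fin, smul_eq_mul]
      simp only [this]
      rw [← Finset.mul_sum, Finset.sum_comm]
      have : ∀ j : Fin n, (∑ i : Fin k, if σ j ≠ i then a j else 0) = (k - 1) * a j := by
        intro j
        have h5 : ∀ i : Fin k, (if σ j ≠ i then a j else 0) = if i ≠ σ j then a j else 0 := by
          intro i
          exact if_congr ne_comm rfl rfl
        simp only [h5]
        exact sum_ite_ne (σ j) (a j)
      simp only [this]
      rw [← Finset.mul_sum]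
      ring
    have E2 : (∑ j : Fin n, ∑ _y : Fin (a j), ∑ i : Fin k, if i ≠ σ j then H else 0)
        = (k - 1) * (∑ j, a j) * H := by
      have : ∀ j : Fin n, (∑ i : Fin k, if i ≠ σ j then H else 0) = (k - 1) * H :=
        fun j => sum_ite_ne (σ j) H
      simp only [this, Finset.sum_const, Finset.card_univ, Fintype.card_fin, smul_eq_mul]
      rw [← Finset.sum_mul]
      ring
    rw [E1, E2]
    ring
  -- count the internal non-edges
  have hN2 : (∑ u : BinV k H n a, ∑ v : BinV k H n a,
      if (innerG (binGraph k H n a) f).Adj u v then 1 else 0)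
      = ∑ j : Fin n, ∑ j' : Fin n, if j ≠ j' ∧ σ j = σ j' then a j * a j' else 0 := by
    simp only [sum_binV]
    have T1 : ∀ (i : Fin k) (x : Fin H), (∑ i' : Fin k, ∑ x' : Fin H,
        if (innerG (binGraph k H n a) f).Adj (Sum.inl (i, x)) (Sum.inl (i', x'))
        then 1 else 0) = 0 := by
      refine fun i x => Finset.sum_eq_zero fun i' _ => Finset.sum_eq_zero fun x' _ => if_neg ?_
      rintro ⟨⟨hne, hnadj⟩, hfe⟩
      exact hnadj ⟨hne, hfe⟩
    have T2 : ∀ (i : Fin k) (x : Fin H), (∑ j : Fin n, ∑ y : Fin (a j),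
        if (innerG (binGraph k H n a) f).Adj (Sum.inl (i, x)) (Sum.inr ⟨j, y⟩)
        then 1 else 0) = 0 := by
      refine fun i x => Finset.sum_eq_zero fun j _ => Finset.sum_eq_zero fun y _ => if_neg ?_
      rintro ⟨⟨hne, hnadj⟩, -⟩
      exact hnadj ⟨hne, trivial⟩
    have T3 : ∀ (j : Fin n) (y : Fin (a j)), (∑ i : Fin k, ∑ x : Fin H,
        if (innerG (binGraph k H n a) f).Adj (Sum.inr ⟨j, y⟩) (Sum.inl (i, x))
        then 1 else 0) = 0 := by
      refine fun j y => Finset.sum_eq_zero fun i _ => Finset.sum_eq_zero fun x _ => if_neg ?_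
      rintro ⟨⟨hne, hnadj⟩, -⟩
      exact hnadj ⟨hne, trivial⟩
    have T4 : ∀ (j : Fin n) (y : Fin (a j)), (∑ j' : Fin n, ∑ y' : Fin (a j'),
        if (innerG (binGraph k H n a) f).Adj (Sum.inr ⟨j, y⟩) (Sum.inr ⟨j', y'⟩)
        then 1 else 0) = ∑ j' : Fin n, if j ≠ j' ∧ σ j = σ j' then a j' else 0 := by
      intro j y
      refine Finset.sum_congr rfl fun j' _ => ?_
      have h4 : ∀ y' : Fin (a j'),
          (if (innerG (binGraph k H n a) f).Adj (Sum.inr ⟨j, y⟩) (Sum.inr ⟨j', y'⟩)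
            then (1:ℕ) else 0) = if j ≠ j' ∧ σ j = σ j' then 1 else 0 := by
        intro y'
        refine if_congr ⟨?_, ?_⟩ rfl rfl
        · rintro ⟨⟨hne, hnadj⟩, hfe⟩
          exact ⟨fun hjj => hnadj ⟨hne, hjj⟩, hfe⟩
        · rintro ⟨hjj, hfe⟩
          refine ⟨⟨?_, ?_⟩, hfe⟩
          · intro hEq
            injection hEq with h2
            exact hjj (congrArg Sigma.fst h2)
          · rintro ⟨-, hside⟩
            exact hjj hside
      simp only [h4]
      rw [Finset.sum_const, Finset.card_univ, Fintype.card_fin, smul_eq_mul,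
        mul_ite, mul_one, mul_zero]
    simp only [T1, T2, T3, T4, zero_add, add_zero, Finset.sum_const_zero]
    refine Finset.sum_congr rfl fun j _ => ?_
    rw [Finset.sum_const, Finset.card_univ, Fintype.card_fin, smul_eq_mul, Finset.mul_sum]
    refine Finset.sum_congr rfl fun j' _ => ?_
    rw [mul_ite, mul_zero]
  -- the cardinalities of the W_i
  have hW : ∀ i : Fin k, (P i \ Bset k H n a i).card
      = ∑ j : Fin n, if σ j = i then a j else 0 := by
    intro i
    rw [← Finset.filter_univ_mem (P i \ Bset k H n a i), Finset.card_filter, sum_binV]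
    have T1 : ∀ (i' : Fin k) (x : Fin H),
        (if (Sum.inl (i', x) : BinV k H n a) ∈ P i \ Bset k H n a i then (1:ℕ) else 0)
          = 0 := by
      intro i' x
      rw [if_neg]
      rw [Finset.mem_sdiff]
      rintro ⟨hPi, hBi⟩
      have : i' = i := (hmemiff _ i).mp hPi
      subst this
      exact hBi (by simp [Bset])
    have T2 : ∀ (j : Fin n) (y : Fin (a j)),
        (if (Sum.inr ⟨j, y⟩ : BinV k H n a) ∈ P i \ Bset k H n a i then (1:ℕ) else 0)
          = if σ j = i then 1 else 0 := by
      intro j y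
      refine if_congr ?_ rfl rfl
      rw [Finset.mem_sdiff, hmemiff]
      constructor
      · rintro ⟨h1, -⟩; exact h1
      · intro h1
        exact ⟨h1, by simp [Bset]⟩
    simp only [T1, T2, Finset.sum_const_zero, zero_add]
    refine Finset.sum_congr rfl fun j _ => ?_
    rw [Finset.sum_const, Finset.card_univ, Fintype.card_fin, smul_eq_mul,
      mul_ite, mul_one, mul_zero]
  -- assemble
  have key : (∑ j : Fin n, ∑ j' : Fin n, if j ≠ j' ∧ σ j = σ j' then a j * a j' else 0)
      + ∑ j, a j ^ 2 = ∑ i : Fin k, (∑ j : Fin n, if σ j = i then a j else 0) ^ 2 := by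
    rw [sq_sum_ite σ a]
    have hs : ∀ j : Fin n, a j ^ 2 = ∑ j' : Fin n, if j' = j then a j * a j' else 0 := by
      intro j
      rw [Finset.sum_ite_eq' Finset.univ j (fun j' => a j * a j'), if_pos (Finset.mem_univ j), sq]
    simp only [hs]
    rw [← Finset.sum_add_distrib]
    refine Finset.sum_congr rfl fun j _ => ?_
    rw [← Finset.sum_add_distrib]
    refine Finset.sum_congr rfl fun j' _ => ?_
    by_cases h1 : j = j'
    · subst h1
      simp
    · have h2 : ¬ j' = j := fun h => h1 h.symm
      by_cases h3 : σ j = σ j' <;> simp [h1, h2, h3]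
  simp only [hW]
  rw [hcost, hN1, hN2, add_assoc, key]

end ClusterEditing
end

section
/- Let k, n ≥ 10, b ≥ 1 and a_1, …, a_n be positive integers with a_j ≤ b for all j and Σ_j a_j = k·b, and let G, t be the associated construction. If there exists a function f : [n] → [k] such that Σ_{j : f(j)=i} a_j = b for every i ∈ [k] (a perfect packing of the n items into k bins of capacity b), then G has a clustering of cost exactly t (namely the clustering with parts P_i = B_i ∪ ⋃_{j : f(j)=i} A_j for i ∈ [k]). -/
open Finset

universe u

namespace ClusterEditing




variable {V : Type u}

def idx {k h n : ℕ} {a : Fin n → ℕ} (f : Fin n → Fin k) : BinV k h n a → Fin k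
  | Sum.inl x => x.1
  | Sum.inr x => f x.1

def partOf {k : ℕ} (h : ℕ) {n : ℕ} (a : Fin n → ℕ) (f : Fin n → Fin k) (i : Fin k) :
    Finset (BinV k h n a) :=
  Bset k h n a i ∪ (univ.filter (fun j => f j = i)).biUnion (Aset k h n a)

lemma mem_partOf {k h n : ℕ} {a : Fin n → ℕ} (f : Fin n → Fin k) (i : Fin k)
    (v : BinV k h n a) : v ∈ partOf h a f i ↔ idx f v = i := by
  cases v with
  | inl x => simp [partOf, Bset, Aset, idx, Prod.ext_iff, eq_comm]
  | inr x =>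
      simp only [partOf, Bset, Aset, idx, mem_union, mem_image, mem_biUnion, mem_filter,
        mem_univ, true_and]
      constructor
      · rintro (⟨y, hy⟩ | ⟨j, hj, y, hy⟩)
        · exact absurd hy (by simp)
        · obtain ⟨rfl, _⟩ := Sigma.mk.inj_iff.mp (Sum.inr.inj hy)
          exact hj
      · intro hfi
        exact Or.inr ⟨x.1, hfi, x.2, rfl⟩

lemma exists_part_iff {k h n : ℕ} {a : Fin n → ℕ} (f : Fin n → Fin k)
    (u v : BinV k h n a) :
    (∃ C ∈ (univ : Finset (Fin k)).image (partOf h a f), u ∈ C ∧ v ∈ C) ↔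
      idx f u = idx f v := by
  constructor
  · rintro ⟨C, hC, hu, hv⟩
    obtain ⟨i, -, rfl⟩ := mem_image.mp hC
    rw [mem_partOf] at hu hv
    rw [hu, hv]
  · intro hh
    exact ⟨partOf h a f (idx f u), mem_image_of_mem _ (mem_univ _),
      (mem_partOf ..).mpr rfl, (mem_partOf ..).mpr hh.symm⟩

lemma part_mem_iff {k h n : ℕ} {a : Fin n → ℕ} (f : Fin n → Fin k)
    (u v : BinV k h n a) :
    (∃ C ∈ (univ : Finset (Fin k)).image (partOf h a f), ∀ w ∈ s(u, v), w ∈ C) ↔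
      idx f u = idx f v := by
  rw [← exists_part_iff f u v]
  refine exists_congr fun C => and_congr_right fun _ => ?_
  simp [Sym2.mem_iff, forall_eq_or_imp]

def binPartition (k h n : ℕ) (a : Fin n → ℕ) (f : Fin n → Fin k) (hh : 0 < h) :
    Finpartition (univ : Finset (BinV k h n a)) where
  parts := (univ : Finset (Fin k)).image (partOf h a f)
  supIndep := by
    rw [Finset.supIndep_iff_pairwiseDisjoint]
    rintro C hC D hD hne
    simp only [coe_image, Set.mem_image] at hC hD
    obtain ⟨i, -, rfl⟩ := hC
    obtain ⟨i', -, rfl⟩ := hD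
    simp only [Function.onFun, id]
    rw [Finset.disjoint_left]
    intro v hv hv'
    rw [mem_partOf] at hv hv'
    exact hne (by rw [← hv, ← hv'])
  sup_parts := by
    ext v
    simp only [Finset.mem_sup, mem_image, mem_univ, true_and, id]
    refine ⟨fun _ => trivial, fun _ => ⟨partOf h a f (idx f v), ⟨idx f v, rfl⟩,
      (mem_partOf ..).mpr rfl⟩⟩
  bot_notMem := by
    simp only [Finset.bot_eq_empty, mem_image, mem_univ, true_and, not_exists]
    intro i hi
    have : (Sum.inl (i, ⟨0, hh⟩) : BinV k h n a) ∈ partOf h a f i :=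
      (mem_partOf ..).mpr rfl
    rw [hi] at this
    exact absurd this (Finset.notMem_empty _)

lemma binPartition_parts (k h n : ℕ) (a : Fin n → ℕ) (f : Fin n → Fin k) (hh : 0 < h) :
    (binPartition k h n a f hh).parts = (univ : Finset (Fin k)).image (partOf h a f) := rfl


theorem statement4 (k n b H t : ℕ) (a : Fin n → ℕ)
    (hk : 10 ≤ k) (hn : 10 ≤ n) (hb : 1 ≤ b)
    (hpos : ∀ j, 1 ≤ a j) (hub : ∀ j, a j ≤ b)
    (hsum : ∑ j, a j = k * b)
    (hH : H = (n * k * ∑ j, a j) ^ 10)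
    (ht : t = (k - 1) * (∑ j, a j) * H + (k * b ^ 2 - ∑ j, a j ^ 2) / 2)
    (f : Fin n → Fin k)
    (hf : ∀ i : Fin k, ∑ j ∈ univ.filter (fun j => f j = i), a j = b) :
    ∃ 𝒞 : Finpartition (univ : Finset (BinV k H n a)),
      𝒞.parts = (univ : Finset (Fin k)).image
        (fun i => Bset k H n a i ∪ (univ.filter (fun j => f j = i)).biUnion (Aset k H n a)) ∧
      cost (binGraph k H n a) 𝒞 = t := by
  classical
  have hsumpos : 0 < ∑ j, a j := by
    rw [hsum]; exact Nat.mul_pos (by omega) (by omega)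
  have hH0 : 0 < H := by
    subst hH
    exact pow_pos (Nat.mul_pos (Nat.mul_pos (by omega) (by omega)) hsumpos) 10
  refine ⟨binPartition k H n a f hH0, rfl, ?_⟩
  -- the two explicit finsets of pairs
  set F1 : Finset (Sym2 (BinV k H n a)) :=
    ((univ : Finset ((Fin k × Fin H) × ((j : Fin n) × Fin (a j)))).filter
      (fun q => ¬ f q.2.1 = q.1.1)).image
      (fun q => s(Sum.inl q.1, Sum.inr q.2)) with hF1def
  set F2 : Finset (Sym2 (BinV k H n a)) :=
    ((univ : Finset (((j : Fin n) × Fin (a j)) × ((j : Fin n) × Fin (a j)))).filter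
      (fun q => q.1.1 < q.2.1 ∧ f q.1.1 = f q.2.1)).image
      (fun q => s(Sum.inr q.1, Sum.inr q.2)) with hF2def
  -- identify the cut-edge set
  have hS1 : {e : Sym2 (BinV k H n a) | e ∈ (binGraph k H n a).edgeSet ∧
      (∀ v ∈ e, v ∈ (univ : Finset (BinV k H n a))) ∧
      ¬ ∃ C ∈ (binPartition k H n a f hH0).parts, ∀ v ∈ e, v ∈ C} = ↑F1 := by
    ext e
    induction e using Sym2.ind with
    | _ u v =>
      rw [Set.mem_setOf_eq, binPartition_parts, part_mem_iff]
      simp only [SimpleGraph.mem_edgeSet, Finset.mem_univ, implies_true, true_and,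
        hF1def, Finset.mem_coe, mem_image, mem_filter]
      constructor
      · rintro ⟨⟨hne, hside⟩, hgne⟩
        cases u with
        | inl x =>
          cases v with
          | inl y =>
            exact absurd (show idx f (Sum.inl x) = idx f (Sum.inl y) from hside) hgne
          | inr y =>
            exact ⟨(x, y), fun hh => hgne hh.symm, rfl⟩
        | inr x =>
          cases v with
          | inl y =>
            exact ⟨(y, x), fun hh => hgne hh, Sym2.eq_swap⟩
          | inr y =>
            exact absurd (show idx f (Sum.inr x) = idx f (Sum.inr y) from
              congrArg f hside) hgne
      · rintro ⟨⟨xx, yy⟩, hfq, hq⟩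
        rw [Sym2.eq_iff] at hq
        rcases hq with ⟨h1, h2⟩ | ⟨h1, h2⟩
        · subst h1; subst h2
          exact ⟨⟨by simp, trivial⟩, fun hh => hfq hh.symm⟩
        · subst h1; subst h2
          refine ⟨⟨by simp, trivial⟩, fun hh => hfq hh⟩
  -- identify the internal non-edge set
  have hS2 : {e : Sym2 (BinV k H n a) | e ∈ (binGraph k H n a)ᶜ.edgeSet ∧
      ∃ C ∈ (binPartition k H n a f hH0).parts, ∀ v ∈ e, v ∈ C} = ↑F2 := by
    ext e
    induction e using Sym2.ind with
    | _ u v =>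
      rw [Set.mem_setOf_eq, binPartition_parts, part_mem_iff]
      simp only [SimpleGraph.mem_edgeSet, SimpleGraph.compl_adj, hF2def,
        Finset.mem_coe, mem_image, mem_filter, Finset.mem_univ, true_and]
      constructor
      · rintro ⟨⟨hne, hnadj⟩, hgeq⟩
        have hns : ¬ sameSide u v := fun hs => hnadj ⟨hne, hs⟩
        cases u with
        | inl x =>
          cases v with
          | inl y => exact absurd (show sameSide (Sum.inl x) (Sum.inl y) from hgeq) hns
          | inr y => exact absurd trivial hns
        | inr x =>
          cases v with
          | inl y => exact absurd trivial hns
          | inr y =>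
            have hxy : x.1 ≠ y.1 := fun hh => hns hh
            rcases lt_or_gt_of_ne hxy with hlt | hgt
            · exact ⟨(x, y), ⟨hlt, hgeq⟩, rfl⟩
            · exact ⟨(y, x), ⟨hgt, hgeq.symm⟩, Sym2.eq_swap⟩
      · rintro ⟨⟨xx, yy⟩, ⟨hlt, hfeq⟩, hq⟩
        have hne1 : xx.1 ≠ yy.1 := Fin.ne_of_lt hlt
        rw [Sym2.eq_iff] at hq
        rcases hq with ⟨h1, h2⟩ | ⟨h1, h2⟩
        · subst h1; subst h2
          exact ⟨⟨fun hh => hne1 (congrArg Sigma.fst (Sum.inr.inj hh)),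
            fun hadj => hne1 hadj.2⟩, hfeq⟩
        · subst h1; subst h2
          exact ⟨⟨fun hh => hne1.symm (congrArg Sigma.fst (Sum.inr.inj hh)),
            fun hadj => hne1.symm hadj.2⟩, hfeq.symm⟩
  -- key: summing a constant over all but one index of `Fin k`
  have key : ∀ (c : Fin k) (x : ℕ), (∑ i : Fin k, if ¬ c = i then x else 0) = (k - 1) * x := by
    intro c x
    have hx : (∑ i : Fin k, if c = i then x else 0) = x := by simp
    have hsum2 : (∑ i : Fin k, ((if ¬ c = i then x else 0) + (if c = i then x else 0)))
        = k * x := by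
      have hterm : ∀ i : Fin k, ((if ¬ c = i then x else 0) + (if c = i then x else 0)) = x := by
        intro i; by_cases hci : c = i <;> simp [hci]
      rw [Finset.sum_congr rfl fun i _ => hterm i, Finset.sum_const, Finset.card_univ,
        Fintype.card_fin, smul_eq_mul]
    rw [Finset.sum_add_distrib, hx] at hsum2
    rw [Nat.sub_mul, one_mul]
    exact Nat.eq_sub_of_add_eq hsum2
  have hcard1 : F1.card = (k - 1) * (∑ j, a j) * H := by
    rw [hF1def, Finset.card_image_of_injOn]
    · rw [Finset.card_filter, Fintype.sum_prod_type]
      have inner : ∀ x : Fin k × Fin H,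
          (∑ y : (j : Fin n) × Fin (a j), if ¬ f y.1 = x.1 then (1 : ℕ) else 0)
            = ∑ j : Fin n, if ¬ f j = x.1 then a j else 0 := by
        intro x
        rw [← Finset.univ_sigma_univ, Finset.sum_sigma]
        refine Finset.sum_congr rfl fun j _ => ?_
        by_cases hc : ¬ f j = x.1 <;> simp [hc]
      calc (∑ x : Fin k × Fin H, ∑ y : (j : Fin n) × Fin (a j),
              if ¬ f y.1 = x.1 then (1 : ℕ) else 0)
          = ∑ x : Fin k × Fin H, ∑ j : Fin n, (if ¬ f j = x.1 then a j else 0) :=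
            Finset.sum_congr rfl fun x _ => inner x
        _ = ∑ i : Fin k, ∑ _z : Fin H, ∑ j : Fin n, (if ¬ f j = i then a j else 0) := by
              rw [Fintype.sum_prod_type]
        _ = ∑ i : Fin k, H * ∑ j : Fin n, (if ¬ f j = i then a j else 0) := by
              refine Finset.sum_congr rfl fun i _ => ?_
              rw [Finset.sum_const, Finset.card_univ, Fintype.card_fin, smul_eq_mul]
        _ = H * ∑ i : Fin k, ∑ j : Fin n, (if ¬ f j = i then a j else 0) := by
              rw [Finset.mul_sum]
        _ = H * ∑ j : Fin n, ∑ i : Fin k, (if ¬ f j = i then a j else 0) := by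
              rw [Finset.sum_comm]
        _ = H * ∑ j : Fin n, (k - 1) * a j := by
              exact congrArg _ (Finset.sum_congr rfl fun j _ => key (f j) (a j))
        _ = (k - 1) * (∑ j, a j) * H := by rw [← Finset.mul_sum]; ring
    · intro q hq q' hq' hee
      rw [Sym2.eq_iff] at hee
      rcases hee with ⟨h1, h2⟩ | ⟨h1, h2⟩
      · exact Prod.ext (Sum.inl.inj h1) (Sum.inr.inj h2)
      · exact absurd h1 (by simp)
  have hcard2 : F2.card = ∑ j : Fin n, ∑ j' : Fin n,
      (if j < j' ∧ f j = f j' then a j * a j' else 0) := by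
    rw [hF2def, Finset.card_image_of_injOn]
    · rw [Finset.card_filter, Fintype.sum_prod_type]
      have inner : ∀ y : (j : Fin n) × Fin (a j),
          (∑ z : (j : Fin n) × Fin (a j), if y.1 < z.1 ∧ f y.1 = f z.1 then (1 : ℕ) else 0)
            = ∑ j' : Fin n, if y.1 < j' ∧ f y.1 = f j' then a j' else 0 := by
        intro y
        rw [← Finset.univ_sigma_univ, Finset.sum_sigma]
        refine Finset.sum_congr rfl fun j' _ => ?_
        by_cases hc : y.1 < j' ∧ f y.1 = f j' <;> simp [hc]
      calc (∑ y : (j : Fin n) × Fin (a j), ∑ z : (j : Fin n) × Fin (a j),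
              if y.1 < z.1 ∧ f y.1 = f z.1 then (1 : ℕ) else 0)
          = ∑ y : (j : Fin n) × Fin (a j), ∑ j' : Fin n,
              (if y.1 < j' ∧ f y.1 = f j' then a j' else 0) :=
            Finset.sum_congr rfl fun y _ => inner y
        _ = ∑ j : Fin n, ∑ _w : Fin (a j), ∑ j' : Fin n,
              (if j < j' ∧ f j = f j' then a j' else 0) := by rw [← Finset.univ_sigma_univ, Finset.sum_sigma]
        _ = ∑ j : Fin n, a j * ∑ j' : Fin n, (if j < j' ∧ f j = f j' then a j' else 0) := by
              refine Finset.sum_congr rfl fun j _ => ?_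
              rw [Finset.sum_const, Finset.card_univ, Fintype.card_fin, smul_eq_mul]
        _ = ∑ j : Fin n, ∑ j' : Fin n, (if j < j' ∧ f j = f j' then a j * a j' else 0) := by
              refine Finset.sum_congr rfl fun j _ => ?_
              rw [Finset.mul_sum]
              refine Finset.sum_congr rfl fun j' _ => ?_
              by_cases hc : j < j' ∧ f j = f j' <;> simp [hc]
    · intro q hq q' hq' hee
      simp only [coe_filter, Set.mem_setOf_eq, Finset.mem_univ, true_and] at hq hq'
      rw [Sym2.eq_iff] at hee
      rcases hee with ⟨h1, h2⟩ | ⟨h1, h2⟩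
      · exact Prod.ext (Sum.inr.inj h1) (Sum.inr.inj h2)
      · exfalso
        have e1 : q.1.1.1 = q'.2.1.1 :=
          congrArg Fin.val (congrArg Sigma.fst (Sum.inr.inj h1))
        have e2 : q.2.1.1 = q'.1.1.1 :=
          congrArg Fin.val (congrArg Sigma.fst (Sum.inr.inj h2))
        have l1 := hq.1; have l2 := hq'.1
        rw [Fin.lt_def] at l1 l2
        omega
  -- the double-sum identities
  have hdouble : (∑ j : Fin n, ∑ j' : Fin n, if f j = f j' then a j * a j' else 0)
      = k * b ^ 2 := by
    have hinner : ∀ j : Fin n,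
        (∑ j' : Fin n, if f j = f j' then a j * a j' else 0) = a j * b := by
      intro j
      have hstep : (∑ j' : Fin n, if f j = f j' then a j * a j' else 0)
          = a j * ∑ j' ∈ univ.filter (fun j' => f j' = f j), a j' := by
        rw [Finset.sum_filter, Finset.mul_sum]
        refine Finset.sum_congr rfl fun j' _ => ?_
        by_cases hc : f j = f j'
        · simp [hc]
        · simp [hc, show f j' ≠ f j from fun h => hc h.symm]
      rw [hstep, hf (f j)]
    rw [Finset.sum_congr rfl fun j _ => hinner j, ← Finset.sum_mul, hsum]
    ring
  have hsplit : (∑ j : Fin n, ∑ j' : Fin n, if f j = f j' then a j * a j' else 0)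
      = 2 * (∑ j : Fin n, ∑ j' : Fin n, if j < j' ∧ f j = f j' then a j * a j' else 0)
        + ∑ j, a j ^ 2 := by
    have hterm : ∀ j j' : Fin n, (if f j = f j' then a j * a j' else 0)
        = (if j < j' ∧ f j = f j' then a j * a j' else 0)
          + (if j' < j ∧ f j = f j' then a j * a j' else 0)
          + (if j = j' then (if f j = f j' then a j * a j' else 0) else 0) := by
      intro j j'
      by_cases hc : f j = f j'
      · rcases lt_trichotomy j j' with hh | hh | hh
        · simp [hc, hh, asymm hh, Fin.ne_of_lt hh]
        · simp [hc, hh, lt_irrefl]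
        · simp [hc, hh, asymm hh, (Fin.ne_of_lt hh).symm, Ne.symm (Fin.ne_of_lt hh)]
      · simp [hc]
    calc (∑ j : Fin n, ∑ j' : Fin n, if f j = f j' then a j * a j' else 0)
        = ∑ j : Fin n, ∑ j' : Fin n,
            ((if j < j' ∧ f j = f j' then a j * a j' else 0)
              + (if j' < j ∧ f j = f j' then a j * a j' else 0)
              + (if j = j' then (if f j = f j' then a j * a j' else 0) else 0)) := by
          exact Finset.sum_congr rfl fun j _ => Finset.sum_congr rfl fun j' _ => hterm j j'
      _ = (∑ j : Fin n, ∑ j' : Fin n, if j < j' ∧ f j = f j' then a j * a j' else 0)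
          + (∑ j : Fin n, ∑ j' : Fin n, if j' < j ∧ f j = f j' then a j * a j' else 0)
          + (∑ j : Fin n, ∑ j' : Fin n,
              if j = j' then (if f j = f j' then a j * a j' else 0) else 0) := by
          simp [Finset.sum_add_distrib]
      _ = 2 * (∑ j : Fin n, ∑ j' : Fin n, if j < j' ∧ f j = f j' then a j * a j' else 0)
          + ∑ j, a j ^ 2 := by
          have hB : (∑ j : Fin n, ∑ j' : Fin n, if j' < j ∧ f j = f j' then a j * a j' else 0)
              = ∑ j : Fin n, ∑ j' : Fin n, if j < j' ∧ f j = f j' then a j * a j' else 0 := by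
            rw [Finset.sum_comm]
            refine Finset.sum_congr rfl fun u _ => Finset.sum_congr rfl fun v _ => ?_
            by_cases hc : u < v ∧ f v = f u
            · rw [if_pos hc, if_pos ⟨hc.1, hc.2.symm⟩, mul_comm]
            · have hc' : ¬ (u < v ∧ f u = f v) := fun h => hc ⟨h.1, h.2.symm⟩
              rw [if_neg hc, if_neg hc']
          have hC : (∑ j : Fin n, ∑ j' : Fin n,
                if j = j' then (if f j = f j' then a j * a j' else 0) else 0)
              = ∑ j, a j ^ 2 := by
            refine Finset.sum_congr rfl fun j _ => ?_
            simp [Finset.sum_ite_eq, sq]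
          rw [hB, hC]
          ring
  have h2XS : 2 * (∑ j : Fin n, ∑ j' : Fin n, if j < j' ∧ f j = f j' then a j * a j' else 0)
      + ∑ j, a j ^ 2 = k * b ^ 2 := by rw [← hsplit, hdouble]
  unfold cost costOn
  rw [hS1, hS2, Set.ncard_coe_finset, Set.ncard_coe_finset, hcard1, hcard2, ht]
  have hdiv : (k * b ^ 2 - ∑ j, a j ^ 2) / 2
      = ∑ j : Fin n, ∑ j' : Fin n, (if j < j' ∧ f j = f j' then a j * a j' else 0) := by
    rw [← h2XS, Nat.add_sub_cancel]
    omega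
  rw [hdiv]



end ClusterEditing
end
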